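/- (Uniform bounds on the encoded state and output.) Under the setup of the encrypted closed loop — controller matrices A, B, C, D and x₀ with entries in Q_{k,ℓ} (k > ℓ ≥ 1), Ā := 2^ℓ A, B̄ := 2^ℓ B, C̄ := 2^ℓ C, D̄ := 2^ℓ D, arbitrary w : ℕ → {−1,0,1}^n, x̂_p(0) = x_{p,0}, x̃(0) = 2^ℓ x₀, ŷ(t) = C_p x̂_p(t), ȳ(t) = ⌊2^ℓ ŷ(t)⌉, x̃(t+1) = ⌊(Ā x̃(t) + B̄ ȳ(t))/2^ℓ⌉ + w(t), ũ(t) = C̄ x̃(t) + D̄ ȳ(t), x̂_p(t+1) = A_p x̂_p(t) + B_p·2^{−2ℓ} ũ(t) — suppose there exist c ≥ 1 and γ ∈ (0,1) with ‖Φ^t‖_∞ ≤ c γ^t for all t. With α := ‖C_p‖_∞ + 3/2 and β := 2^ℓ ‖[x_{p,0}; x₀]‖_∞ + ‖Γ‖_∞/2 + 3/2, it holds for all t ∈ ℕ that ‖x̃(t)‖_∞ < β·c/(1 − γ) and ‖ȳ(t)‖_∞ < α·β·c/(1 − γ). -/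
import Mathlib


attribute [local instance] Matrix.linftyOpNormedAddCommGroup

lemma aux_sol {ι : Type*} [Fintype ι] [DecidableEq ι] (Φ : Matrix ι ι ℝ) (ξ d : ℕ → ι → ℝ)
    (hrec : ∀ t, ξ (t + 1) = Φ.mulVec (ξ t) + d t) :
    ∀ t, ξ t = (Φ ^ t).mulVec (ξ 0) +
      ∑ j ∈ Finset.range t, (Φ ^ (t - 1 - j)).mulVec (d j) := by
  intro t
  induction t with
  | zero => simp [Matrix.one_mulVec]
  | succ t ih =>
    rw [hrec t, ih, Matrix.mulVec_add, Matrix.mulVec_mulVec, ← pow_succ']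
    have h1 : Φ.mulVec (∑ j ∈ Finset.range t, (Φ ^ (t - 1 - j)).mulVec (d j)) =
        ∑ j ∈ Finset.range t, (Φ ^ (t + 1 - 1 - j)).mulVec (d j) := by
      rw [← Matrix.mulVecLin_apply, map_sum]
      refine Finset.sum_congr rfl fun j hj => ?_
      have hj' := Finset.mem_range.1 hj
      rw [Matrix.mulVecLin_apply, Matrix.mulVec_mulVec, ← pow_succ',
        show t + 1 - 1 - j = t - 1 - j + 1 by omega]
    rw [h1, Finset.sum_range_succ]
    simp [Matrix.one_mulVec]
    abel

lemma aux_bound {ι : Type*} [Fintype ι] [DecidableEq ι] (Φ : Matrix ι ι ℝ) (ξ d : ℕ → ι → ℝ)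
    (hrec : ∀ t, ξ (t + 1) = Φ.mulVec (ξ t) + d t) (c γ δ : ℝ)
    (hc : 1 ≤ c) (hγ0 : 0 < γ) (hγ1 : γ < 1)
    (hΦ : ∀ t, ‖Φ ^ t‖ ≤ c * γ ^ t) (hδ : 3 / 2 ≤ δ) (hd : ∀ t, ‖d t‖ ≤ δ) :
    ∀ t, ‖ξ t‖ < (‖ξ 0‖ + δ) * (c / (1 - γ)) := by
  intro t
  have h1γ : (0 : ℝ) < 1 - γ := by linarith
  have hc0 : (0 : ℝ) < c := by linarith
  have hδ0 : (0 : ℝ) < δ := by linarith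
  have hN0 : (0 : ℝ) ≤ ‖ξ 0‖ := norm_nonneg _
  -- norm bound via explicit solution
  have hS0 : (0 : ℝ) ≤ ∑ j ∈ Finset.range t, γ ^ j :=
    Finset.sum_nonneg fun j _ => (pow_pos hγ0 j).le
  have hbd : ‖ξ t‖ ≤ c * γ ^ t * ‖ξ 0‖ + δ * c * ∑ j ∈ Finset.range t, γ ^ j := by
    rw [aux_sol Φ ξ d hrec t]
    refine le_trans (norm_add_le _ _) ?_
    have h1 : ‖(Φ ^ t).mulVec (ξ 0)‖ ≤ c * γ ^ t * ‖ξ 0‖ :=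
      le_trans (Matrix.linfty_opNorm_mulVec _ _)
        (mul_le_mul_of_nonneg_right (hΦ t) (norm_nonneg _))
    have h2 : ‖∑ j ∈ Finset.range t, (Φ ^ (t - 1 - j)).mulVec (d j)‖ ≤
        ∑ j ∈ Finset.range t, δ * c * γ ^ (t - 1 - j) := by
      refine le_trans (norm_sum_le _ _) (Finset.sum_le_sum fun j hj => ?_)
      refine le_trans (Matrix.linfty_opNorm_mulVec _ _) ?_
      calc ‖Φ ^ (t - 1 - j)‖ * ‖d j‖ ≤ (c * γ ^ (t - 1 - j)) * δ :=
            mul_le_mul (hΦ _) (hd j) (norm_nonneg _) (by positivity)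
        _ = δ * c * γ ^ (t - 1 - j) := by ring
    have h3 : ∑ j ∈ Finset.range t, δ * c * γ ^ (t - 1 - j) =
        δ * c * ∑ j ∈ Finset.range t, γ ^ j := by
      rw [Finset.mul_sum]
      exact Finset.sum_range_reflect (fun j => δ * c * γ ^ j) t
    linarith
  have hGS : ∑ j ∈ Finset.range t, γ ^ j < 1 / (1 - γ) := by
    rw [geom_sum_eq (ne_of_lt hγ1) t]
    have heq : (γ ^ t - 1) / (γ - 1) = (1 - γ ^ t) / (1 - γ) := by
      rw [div_eq_div_iff (by linarith) (by linarith)]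
      ring
    rw [heq, div_lt_div_iff₀ h1γ h1γ]
    nlinarith [pow_pos hγ0 t]
  have hγt1 : γ ^ t ≤ 1 := pow_le_one₀ hγ0.le hγ1.le
  have hu : 1 ≤ 1 / (1 - γ) := by rw [le_div_iff₀ h1γ]; linarith
  have ha : c * γ ^ t * ‖ξ 0‖ ≤ c * ‖ξ 0‖ := by nlinarith [mul_nonneg (mul_nonneg hc0.le hN0) (sub_nonneg.2 hγt1)]
  have hb : c * ‖ξ 0‖ ≤ c * ‖ξ 0‖ * (1 / (1 - γ)) := by nlinarith [mul_nonneg (mul_nonneg hc0.le hN0) (sub_nonneg.2 hu)]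
  have hcc : δ * c * (∑ j ∈ Finset.range t, γ ^ j) < δ * c * (1 / (1 - γ)) :=
    mul_lt_mul_of_pos_left hGS (by positivity)
  have hfin : (‖ξ 0‖ + δ) * (c / (1 - γ)) =
      c * ‖ξ 0‖ * (1 / (1 - γ)) + δ * c * (1 / (1 - γ)) := by ring
  linarith


/-- `Q_{k,ℓ}`: the set of `k`-bit fixed-point numbers with `ℓ`-bit fractional part,
`Q_{k,ℓ} = {2^{−ℓ} z : z ∈ ℤ, −2^{k−1} ≤ z < 2^{k−1}}`. -/
def Qfix (k ℓ : ℕ) : Set ℝ :=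
  {x | ∃ z : ℤ, -2 ^ (k - 1) ≤ z ∧ z < 2 ^ (k - 1) ∧ x = (2 : ℝ) ^ (-(ℓ : ℤ)) * z}

/-- Uniform bounds on the encoded state and output: Under the
encrypted closed loop with controller data in `Q_{k,ℓ}` (`k > ℓ ≥ 1`), arbitrary
truncation errors `w(t) ∈ {−1,0,1}^n`, and stability `‖Φ^t‖_∞ ≤ c γ^t` (`c ≥ 1`,
`γ ∈ (0,1)`, induced ∞-norm), and with `α = ‖C_p‖_∞ + 3/2` and
`β = 2^ℓ ‖[x_{p,0}; x₀]‖_∞ + ‖Γ‖_∞/2 + 3/2`, it holds for all `t ∈ ℕ` that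
`‖x̃(t)‖_∞ < β·c/(1 − γ)` and `‖ȳ(t)‖_∞ < α·β·c/(1 − γ)`. -/
theorem stmt_14 (np n m p k ℓ : ℕ)
    (hnp : 1 ≤ np) (hn : 1 ≤ n) (hm : 1 ≤ m) (hp : 1 ≤ p)
    (hℓ : 1 ≤ ℓ) (hkℓ : ℓ < k)
    (Ap : Matrix (Fin np) (Fin np) ℝ) (Bp : Matrix (Fin np) (Fin m) ℝ)
    (Cp : Matrix (Fin p) (Fin np) ℝ)
    (A : Matrix (Fin n) (Fin n) ℝ) (B : Matrix (Fin n) (Fin p) ℝ)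
    (C : Matrix (Fin m) (Fin n) ℝ) (D : Matrix (Fin m) (Fin p) ℝ)
    (xp0 : Fin np → ℝ) (x0 : Fin n → ℝ)
    (hA : ∀ i j, A i j ∈ Qfix k ℓ) (hB : ∀ i j, B i j ∈ Qfix k ℓ)
    (hC : ∀ i j, C i j ∈ Qfix k ℓ) (hD : ∀ i j, D i j ∈ Qfix k ℓ)
    (hx0 : ∀ i, x0 i ∈ Qfix k ℓ)
    -- encrypted closed loop
    (w : ℕ → Fin n → ℝ) (hw : ∀ t i, w t i ∈ ({-1, 0, 1} : Set ℝ))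
    (xph : ℕ → Fin np → ℝ) (xt : ℕ → Fin n → ℝ) (ut : ℕ → Fin m → ℝ)
    (yh : ℕ → Fin p → ℝ) (yb : ℕ → Fin p → ℝ)
    (hxph0 : xph 0 = xp0) (hxt0 : xt 0 = (2 : ℝ) ^ ℓ • x0)
    (hyh : ∀ t : ℕ, yh t = Cp.mulVec (xph t))
    (hyb : ∀ t : ℕ, ∀ i, yb t i = (round ((2 : ℝ) ^ ℓ * yh t i) : ℤ))
    (hxt : ∀ t : ℕ, ∀ i, xt (t + 1) i =
      ((round (((((2 : ℝ) ^ ℓ • A).mulVec (xt t) +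
          ((2 : ℝ) ^ ℓ • B).mulVec (yb t)) i) / (2 : ℝ) ^ ℓ) : ℤ) : ℝ) + w t i)
    (hut : ∀ t : ℕ, ut t =
      ((2 : ℝ) ^ ℓ • C).mulVec (xt t) + ((2 : ℝ) ^ ℓ • D).mulVec (yb t))
    (hxph : ∀ t : ℕ, xph (t + 1) =
      Ap.mulVec (xph t) + Bp.mulVec ((2 : ℝ) ^ (-(2 * ℓ : ℤ)) • ut t))
    -- closed-loop matrices and stability
    (Φ : Matrix (Fin np ⊕ Fin n) (Fin np ⊕ Fin n) ℝ)
    (hΦdef : Φ = Matrix.fromBlocks (Ap + Bp * D * Cp) (Bp * C) (B * Cp) A)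
    (Γ : Matrix (Fin np ⊕ Fin n) (Fin p) ℝ)
    (hΓdef : Γ = Matrix.fromRows (Bp * D) B)
    (c γ : ℝ) (hc : 1 ≤ c) (hγ0 : 0 < γ) (hγ1 : γ < 1)
    (hΦ : ∀ t : ℕ, ‖Φ ^ t‖ ≤ c * γ ^ t)
    (α β : ℝ) (hα : α = ‖Cp‖ + 3 / 2)
    (hβ : β = (2 : ℝ) ^ ℓ * ‖Sum.elim xp0 x0‖ + ‖Γ‖ / 2 + 3 / 2) :
    ∀ t : ℕ, ‖xt t‖ < β * (c / (1 - γ)) ∧ ‖yb t‖ < α * β * (c / (1 - γ)) := by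

  have hE0 : (0 : ℝ) < (2 : ℝ) ^ ℓ := by positivity
  have hEne : ((2 : ℝ) ^ ℓ) ≠ 0 := ne_of_gt hE0
  have h1γ : (0 : ℝ) < 1 - γ := by linarith
  set E : ℝ := (2 : ℝ) ^ ℓ with hEdef
  set ξ : ℕ → (Fin np ⊕ Fin n) → ℝ := fun t => Sum.elim (E • xph t) (xt t) with hξdef
  set r : ℕ → Fin p → ℝ := fun t i => yb t i - E * yh t i with hrdef
  set q : ℕ → Fin n → ℝ := fun t => A.mulVec (xt t) + B.mulVec (yb t) with hqdef
  set e : ℕ → Fin n → ℝ := fun t i => ((round (q t i) : ℤ) : ℝ) - q t i + w t i with hedef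
  set d : ℕ → (Fin np ⊕ Fin n) → ℝ := fun t => Γ.mulVec (r t) + Sum.elim (0 : Fin np → ℝ) (e t) with hddef
  -- basic facts about yb and r
  have hyb' : ∀ t, yb t = E • Cp.mulVec (xph t) + r t := by
    intro t
    funext i
    simp only [hrdef, Pi.add_apply, Pi.smul_apply, smul_eq_mul, hyh t]
    ring
  have hr : ∀ t, ‖r t‖ ≤ 1 / 2 := by
    intro t
    refine (pi_norm_le_iff_of_nonneg (by norm_num)).2 fun i => ?_
    have h := abs_sub_round (E * yh t i)
    rw [abs_sub_comm] at h
    have heq : r t i = ((round (E * yh t i) : ℤ) : ℝ) - E * yh t i := by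
      simp only [hrdef, hyb t i]
    rw [Real.norm_eq_abs, heq]
    exact h
  -- recursion for xt in terms of q
  have hxt' : ∀ t i, xt (t + 1) i = ((round (q t i) : ℤ) : ℝ) + w t i := by
    intro t i
    have h1 : ((((E • A).mulVec (xt t) + (E • B).mulVec (yb t)) i) / E) = q t i := by
      simp only [Matrix.smul_mulVec, Pi.add_apply, Pi.smul_apply, smul_eq_mul, hqdef]
      field_simp
    rw [hxt t i, h1]
  -- vector identities
  have hE2 : (2 : ℝ) ^ (-(2 * ℓ : ℤ)) = (E * E)⁻¹ := by
    have h1 : ((2 * ℓ : ℕ) : ℤ) = (2 * ℓ : ℤ) := by push_cast; ring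
    rw [zpow_neg, ← h1, zpow_natCast, two_mul, pow_add, hEdef]
  have hut2 : ∀ t, (2 : ℝ) ^ (-(2 * ℓ : ℤ)) • ut t =
      (D * Cp).mulVec (xph t) + E⁻¹ • (C.mulVec (xt t) + D.mulVec (r t)) := by
    intro t
    rw [hut t, hE2]
    funext i
    simp only [Matrix.smul_mulVec, Pi.add_apply, Pi.smul_apply, smul_eq_mul,
      ← Matrix.mulVec_mulVec]
    rw [show (D.mulVec (Cp.mulVec (xph t))) i =
        (D.mulVec fun j => (Cp.mulVec (xph t)) j) i from rfl]
    have h2 : D.mulVec (yb t) i = E * D.mulVec (Cp.mulVec (xph t)) i + D.mulVec (r t) i := by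
      rw [hyb' t, Matrix.mulVec_add, Matrix.mulVec_smul]
      simp [Pi.add_apply, Pi.smul_apply, smul_eq_mul]
    rw [h2]
    field_simp
    ring
  have hinl : ∀ t, E • xph (t + 1) =
      (Ap + Bp * D * Cp).mulVec (E • xph t) +
        ((Bp * C).mulVec (xt t) + (Bp * D).mulVec (r t)) := by
    intro t
    rw [hxph t, hut2 t]
    funext i
    simp only [Matrix.mulVec_add, Matrix.mulVec_smul, Matrix.add_mulVec,
      ← Matrix.mulVec_mulVec, Pi.add_apply, Pi.smul_apply, smul_eq_mul]
    field_simp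
    ring
  have hinr : ∀ t, xt (t + 1) =
      (B * Cp).mulVec (E • xph t) + A.mulVec (xt t) + (B.mulVec (r t) + e t) := by
    intro t
    funext j
    have hB2 : B.mulVec (yb t) j =
        (B * Cp).mulVec (E • xph t) j + B.mulVec (r t) j := by
      have hv : B.mulVec (yb t) = (B * Cp).mulVec (E • xph t) + B.mulVec (r t) := by
        rw [hyb' t, Matrix.mulVec_add, Matrix.mulVec_smul, Matrix.mulVec_smul,
          Matrix.mulVec_mulVec]
      exact congrFun hv j
    have hq2 : q t j = A.mulVec (xt t) j + B.mulVec (yb t) j := by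
      simp [hqdef]
    have he2 : e t j = ((round (q t j) : ℤ) : ℝ) - q t j + w t j := rfl
    simp only [Pi.add_apply]
    rw [hxt' t j, he2]
    linarith [hB2, hq2]
  -- the closed-loop recursion
  have hkey : ∀ t, ξ (t + 1) = Φ.mulVec (ξ t) + d t := by
    intro t
    funext i
    have hcl : ξ t ∘ Sum.inl = E • xph t := rfl
    have hcr : ξ t ∘ Sum.inr = xt t := rfl
    simp only [hddef, hΦdef, hΓdef, Matrix.fromBlocks_mulVec, Matrix.fromRows_mulVec,
      hcl, hcr, Pi.add_apply]
    cases i with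
    | inl i =>
      have h := congrFun (hinl t) i
      simp only [Pi.add_apply, Pi.smul_apply, smul_eq_mul] at h
      simp only [hξdef, Sum.elim_inl, Pi.zero_apply, Pi.add_apply, Pi.smul_apply, smul_eq_mul]
      linarith [h]
    | inr j =>
      have h := congrFun (hinr t) j
      simp only [Pi.add_apply, Pi.smul_apply, smul_eq_mul] at h
      simp only [hξdef, Sum.elim_inr, Pi.add_apply]
      linarith [h]
  -- bound on the disturbance
  have hd : ∀ t, ‖d t‖ ≤ ‖Γ‖ / 2 + 3 / 2 := by
    intro t
    have h1 : ‖Γ.mulVec (r t)‖ ≤ ‖Γ‖ * (1 / 2) :=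
      le_trans (Matrix.linfty_opNorm_mulVec _ _)
        (mul_le_mul_of_nonneg_left (hr t) (norm_nonneg _))
    have h2 : ‖Sum.elim (0 : Fin np → ℝ) (e t)‖ ≤ 3 / 2 := by
      refine (pi_norm_le_iff_of_nonneg (by norm_num)).2 fun i => ?_
      cases i with
      | inl i =>
        simp only [Sum.elim_inl, Pi.zero_apply, norm_zero]
        norm_num
      | inr j =>
        have ha : |((round (q t j) : ℤ) : ℝ) - q t j| ≤ 1 / 2 := by
          have := abs_sub_round (q t j)
          rwa [abs_sub_comm] at this
        have hb : |w t j| ≤ 1 := by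
          rcases hw t j with h | h | h <;> rw [h] <;> norm_num
        simp only [Sum.elim_inr, Real.norm_eq_abs, hedef]
        calc |((round (q t j) : ℤ) : ℝ) - q t j + w t j| ≤
            |((round (q t j) : ℤ) : ℝ) - q t j| + |w t j| := abs_add_le _ _
          _ ≤ 3 / 2 := by linarith
    calc ‖d t‖ ≤ ‖Γ.mulVec (r t)‖ + ‖Sum.elim (0 : Fin np → ℝ) (e t)‖ := norm_add_le _ _
      _ ≤ ‖Γ‖ / 2 + 3 / 2 := by linarith
  -- apply the abstract bound
  have hδ : (3 : ℝ) / 2 ≤ ‖Γ‖ / 2 + 3 / 2 := by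
    have := norm_nonneg Γ
    linarith
  have hξ0 : ‖ξ 0‖ = E * ‖Sum.elim xp0 x0‖ := by
    have h : ξ 0 = E • Sum.elim xp0 x0 := by
      funext i
      cases i with
      | inl i => simp [hξdef, hxph0]
      | inr j => simp [hξdef, hxt0]
    rw [h, norm_smul, Real.norm_eq_abs, abs_of_pos hE0]
  have hmain := aux_bound Φ ξ d hkey c γ (‖Γ‖ / 2 + 3 / 2) hc hγ0 hγ1 hΦ hδ hd
  have hββ : β = ‖ξ 0‖ + (‖Γ‖ / 2 + 3 / 2) := by rw [hβ, hξ0]; ring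
  have hξlt : ∀ t, ‖ξ t‖ < β * (c / (1 - γ)) := by
    intro t
    rw [hββ]
    exact hmain t
  -- conclude
  intro t
  have hXt : ‖xt t‖ ≤ ‖ξ t‖ := by
    refine (pi_norm_le_iff_of_nonneg (norm_nonneg _)).2 fun i => ?_
    have h := norm_le_pi_norm (ξ t) (Sum.inr i)
    simpa [hξdef] using h
  have hXl : ‖E • xph t‖ ≤ ‖ξ t‖ := by
    refine (pi_norm_le_iff_of_nonneg (norm_nonneg _)).2 fun i => ?_
    have h := norm_le_pi_norm (ξ t) (Sum.inl i)
    simpa [hξdef] using h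
  constructor
  · exact lt_of_le_of_lt hXt (hξlt t)
  · have hyb2 : yb t = Cp.mulVec (E • xph t) + r t := by
      rw [hyb' t, Matrix.mulVec_smul]
    have h1 : ‖yb t‖ ≤ ‖Cp‖ * ‖E • xph t‖ + 1 / 2 := by
      rw [hyb2]
      refine le_trans (norm_add_le _ _) ?_
      have := Matrix.linfty_opNorm_mulVec Cp (E • xph t)
      linarith [hr t]
    have h2 : ‖Cp‖ * ‖E • xph t‖ ≤ ‖Cp‖ * (β * (c / (1 - γ))) :=
      mul_le_mul_of_nonneg_left (le_of_lt (lt_of_le_of_lt hXl (hξlt t))) (norm_nonneg _)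
    have hβ32 : (3 : ℝ) / 2 ≤ β := by
      rw [hβ]
      have h0 : (0 : ℝ) ≤ (2 : ℝ) ^ ℓ * ‖Sum.elim xp0 x0‖ := by positivity
      have h0' : (0 : ℝ) ≤ ‖Γ‖ / 2 := by positivity
      linarith
    have hcd : (1 : ℝ) ≤ c / (1 - γ) := by
      rw [le_div_iff₀ h1γ]; linarith
    have hK32 : (3 : ℝ) / 2 ≤ β * (c / (1 - γ)) := by
      have := mul_le_mul hβ32 hcd (by norm_num) (by linarith)
      linarith
    have hring : α * β * (c / (1 - γ)) =
        ‖Cp‖ * (β * (c / (1 - γ))) + (3 / 2) * (β * (c / (1 - γ))) := by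
      rw [hα]; ring
    rw [hring]
    linarith [h1, h2, hK32]
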